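/- In a chart with a LLEE-witness, if u and v lie in the same strongly connected component and u ↓* v (u reaches v by finitely many descends-in-loop-to steps), then v (→loops-back-to)* u, i.e., v loops back to u in finitely many steps. -/

import Mathlib

/-- An entry/body-labeled finite chart: a rooted labelled transition system with
termination sink `tick` (√), start vertex `start`, and transitions carrying an
action from `A` together with a marking label in ℕ (label `0` marks body
transitions, positive labels mark entry transitions).  Every vertex other than
possibly `tick` is reachable from the start vertex. -/
structure LChart (V : Type) (A : Type) : Type where
  tick : V
  start : V
  Tr : V → A → ℕ → V → Prop
  tick_no_out : ∀ (a : A) (n : ℕ) (w : V), ¬ Tr tick a n w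
  start_ne_tick : start ≠ tick
  connected : ∀ v : V, v = tick ∨
    Relation.ReflTransGen (fun x y => ∃ (a : A) (n : ℕ), Tr x a n y) start v

namespace LChart

variable {V A : Type}

/-- Body transition step (marking label `0`). -/
def BStep (C : LChart V A) (x y : V) : Prop := ∃ a : A, C.Tr x a 0 y

/-- Entry transition step of level `α > 0`. -/
def EStep (C : LChart V A) (α : ℕ) (x y : V) : Prop := 0 < α ∧ ∃ a : A, C.Tr x a α y

/-- A transition step of any kind. -/
def AnyStep (C : LChart V A) (x y : V) : Prop := ∃ (a : A) (n : ℕ), C.Tr x a n y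

/-- There is an entry transition of level `α` departing from `v`. -/
def HasEntry (C : LChart V A) (v : V) (α : ℕ) : Prop :=
  0 < α ∧ ∃ (a : A) (w : V), C.Tr v a α w

/-- `v` descends in a loop of level `α` to `w`: there is a path from `v` to `w`
starting with an `α`-entry transition and continuing with body transitions, in
which all transition targets avoid `v`. -/
def Descends (C : LChart V A) (v : V) (α : ℕ) (w : V) : Prop :=
  ∃ u : V, C.EStep α v u ∧ u ≠ v ∧
    Relation.ReflTransGen (fun x y => C.BStep x y ∧ y ≠ v) u w

/-- `v` descends in a loop to `w` (at some level). -/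
def Desc (C : LChart V A) (v w : V) : Prop := ∃ α : ℕ, C.Descends v α w

/-- An infinite path from `v` in the loop subchart `C[v,α]`: it starts at `v`,
takes an `α`-entry transition whenever it is at `v`, and body transitions
otherwise. -/
def LoopSeq (C : LChart V A) (v : V) (α : ℕ) (f : ℕ → V) : Prop :=
  f 0 = v ∧ ∀ n : ℕ,
    (f n = v → C.EStep α (f n) (f (n + 1))) ∧ (f n ≠ v → C.BStep (f n) (f (n + 1)))

/-- The conditions (W1), (W2)(a) (the subchart `C[v,α]` is a loop chart, i.e.
(L1) an infinite path from `v` exists, (L2) every infinite path from `v`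
returns to `v` after a positive number of steps, (L3) √ is not a vertex of
`C[v,α]`), and (W2)(b) (layeredness) for an entry/body-labeling to be a
LLEE-witness. -/
structure IsLLEE (C : LChart V A) : Prop where
  w1 : ¬ ∃ f : ℕ → V, f 0 = C.start ∧ ∀ n : ℕ, C.BStep (f n) (f (n + 1))
  w2a_L1 : ∀ (v : V) (α : ℕ), C.HasEntry v α → ∃ f : ℕ → V, C.LoopSeq v α f
  w2a_L2 : ∀ (v : V) (α : ℕ), C.HasEntry v α →
    ∀ f : ℕ → V, C.LoopSeq v α f → ∃ n : ℕ, 0 < n ∧ f n = v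
  w2a_L3 : ∀ (v : V) (α : ℕ), ¬ C.Descends v α C.tick
  w2b : ∀ (v w : V) (α : ℕ), C.Descends v α w → ∀ β : ℕ, α ≤ β → ¬ C.HasEntry w β

/-- `u` and `v` lie in the same strongly connected component. -/
def SameSCC (C : LChart V A) (u v : V) : Prop :=
  Relation.ReflTransGen C.AnyStep u v ∧ Relation.ReflTransGen C.AnyStep v u

/-- `w` loops back to `v`: `v` descends in a loop to `w` and there is a nonempty
path of body transitions from `w` back to `v`. -/
def LoopsBack (C : LChart V A) (w v : V) : Prop :=
  C.Desc v w ∧ Relation.TransGen C.BStep w v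

/-- `w` directly loops back to `v`. -/
def DLoopsBack (C : LChart V A) (w v : V) : Prop :=
  C.LoopsBack w v ∧ ∀ u : V, C.LoopsBack w u → u = v ∨ C.LoopsBack v u

end LChart

/-!
Layeredness makes entry levels strictly decrease as one descends into nested loops. Hence along
a simple path that starts in the body of a loop of level `δ` at `z` and never passes through
`z`, each vertex lies in nested loops of levels at most `δ` and so has no entry transition of
level `≥ δ`. If now `x ↓_α y` and `y` reaches `x`, a simple path from `y` to `x` cannot contain
an entry transition: its source would open a loop of level `< α` whose body reaches `x`, which
has an `α`-entry. So `y` returns to `x` by body transitions, i.e. `y ⇢ x`; applying this to each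
step of `u ↓* v`, where `scc(u) = scc(v)` provides the paths back, gives `v ⇢* u`.
-/

theorem List.exists_isChain_cons_nodup_of_relationReflTransGen {α : Type*} {r : α → α → Prop}
    {a b : α} (h : Relation.ReflTransGen r a b) :
    ∃ l : List α, List.IsChain r (a :: l) ∧ (a :: l).Nodup ∧
      (a :: l).getLast (List.cons_ne_nil _ _) = b := by
  induction h using Relation.ReflTransGen.head_induction_on with
  | refl => exact ⟨[], by simp⟩
  | @head a c hac _ ih =>
    obtain ⟨l, hchain, hnodup, hlast⟩ := ih
    by_cases ha : a ∈ c :: l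
    · obtain ⟨s, t, hst⟩ := List.append_of_mem ha
      rw [hst] at hchain hnodup
      refine ⟨t, hchain.right_of_append, hnodup.sublist (List.sublist_append_right _ _), ?_⟩
      simpa [hst] using hlast
    · exact ⟨c :: l, List.isChain_cons_cons.2 ⟨hac, hchain⟩, List.nodup_cons.2 ⟨ha, hnodup⟩,
        hlast⟩

namespace LChart

variable {V A : Type} {C : LChart V A}

/-- Condition (W2)(b) of a LLEE-witness. -/
def IsLayered (C : LChart V A) : Prop :=
  ∀ (v w : V) (α : ℕ), C.Descends v α w → ∀ β : ℕ, α ≤ β → ¬ C.HasEntry w β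

theorem AnyStep.bStep_or_eStep {x y : V} (hs : C.AnyStep x y) :
    C.BStep x y ∨ ∃ m, C.EStep m x y := by
  obtain ⟨a, n, hs⟩ := hs
  rcases Nat.eq_zero_or_pos n with rfl | hn
  · exact Or.inl ⟨a, hs⟩
  · exact Or.inr ⟨n, hn, a, hs⟩

theorem descends_of_eStep {x y : V} {α : ℕ} (h : C.EStep α x y) (hne : y ≠ x) :
    C.Descends x α y :=
  ⟨y, h, hne, .refl⟩

theorem Descends.tail {z w b : V} {δ : ℕ} (hd : C.Descends z δ w) (hb : C.BStep w b)
    (hbz : b ≠ z) : C.Descends z δ b := by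
  obtain ⟨u, hentry, huz, hpath⟩ := hd
  exact ⟨u, hentry, huz, hpath.tail ⟨hb, hbz⟩⟩

theorem Descends.ne {x y : V} {α : ℕ} (hd : C.Descends x α y) : y ≠ x := by
  obtain ⟨u, _, hux, hpath⟩ := hd
  cases hpath.cases_tail with
  | inl h => exact h ▸ hux
  | inr h => obtain ⟨_, _, _, hyx⟩ := h; exact hyx

theorem Descends.hasEntry {x y : V} {α : ℕ} (hd : C.Descends x α y) : C.HasEntry x α := by
  obtain ⟨u, ⟨hα, a, htr⟩, _⟩ := hd
  exact ⟨hα, a, u, htr⟩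

theorem Desc.reflTransGen_anyStep {x y : V} (hd : C.Desc x y) :
    Relation.ReflTransGen C.AnyStep x y := by
  obtain ⟨α, u, ⟨_, a, htr⟩, _, hpath⟩ := hd
  exact .head ⟨a, α, htr⟩
    (Relation.ReflTransGen.mono (fun _ _ ⟨⟨a', h⟩, _⟩ => ⟨a', 0, h⟩) _ _ hpath)

theorem reflTransGen_anyStep_of_reflTransGen_desc {x y : V}
    (hd : Relation.ReflTransGen C.Desc x y) : Relation.ReflTransGen C.AnyStep x y :=
  Relation.reflTransGen_closed (fun _ _ h => Desc.reflTransGen_anyStep h) _ _ hd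

namespace IsLayered

theorem lt_of_descends_of_eStep (hL : C.IsLayered) {z w b : V} {δ m : ℕ}
    (hd : C.Descends z δ w) (he : C.EStep m w b) : m < δ := by
  obtain ⟨hm, a, htr⟩ := he
  exact lt_of_not_ge fun hle => hL z w δ hd m hle ⟨hm, a, b, htr⟩

theorem not_hasEntry_of_isChain_nodup (hL : C.IsLayered) :
    ∀ (l : List V) {z w : V} {δ β : ℕ}, List.IsChain C.AnyStep (w :: l) →
      (z :: w :: l).Nodup → C.Descends z δ w → δ ≤ β →
      ¬ C.HasEntry ((w :: l).getLast (List.cons_ne_nil _ _)) β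
  | [], _, _, _, _, _, _, hd, hδβ => hL _ _ _ hd _ hδβ
  | b :: l, z, w, _, _, hchain, hnodup, hd, hδβ => by
    rw [List.getLast_cons (List.cons_ne_nil _ _)]
    obtain ⟨hwb, hchain⟩ := List.isChain_cons_cons.1 hchain
    have hbz : b ≠ z := by grind
    have hbw : b ≠ w := by grind
    rcases hwb.bStep_or_eStep with hbody | ⟨m, hentry⟩
    · exact hL.not_hasEntry_of_isChain_nodup l hchain (by grind) (hd.tail hbody hbz) hδβ
    · exact hL.not_hasEntry_of_isChain_nodup l hchain hnodup.of_cons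
        (descends_of_eStep hentry hbw) ((hL.lt_of_descends_of_eStep hd hentry).le.trans hδβ)

theorem transGen_bStep_of_isChain_nodup (hL : C.IsLayered) :
    ∀ (l : List V) {x y : V} {α : ℕ}, List.IsChain C.AnyStep (y :: l) → (y :: l).Nodup →
      (y :: l).getLast (List.cons_ne_nil _ _) = x → C.Descends x α y →
      Relation.TransGen C.BStep y x
  | [], _, _, _, _, _, hlast, hd => (hd.ne hlast).elim
  | b :: l, x, y, α, hchain, hnodup, hlast, hd => by
    rw [List.getLast_cons (List.cons_ne_nil _ _)] at hlast
    obtain ⟨hyb, hchain⟩ := List.isChain_cons_cons.1 hchain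
    rcases hyb.bStep_or_eStep with hbody | ⟨m, hentry⟩
    · by_cases hbx : b = x
      · exact .single (hbx ▸ hbody)
      · exact .head hbody <| hL.transGen_bStep_of_isChain_nodup l hchain hnodup.of_cons hlast
          (hd.tail hbody hbx)
    · have hby : b ≠ y := by grind
      exact absurd (hlast ▸ hd.hasEntry) <| hL.not_hasEntry_of_isChain_nodup l hchain hnodup
        (descends_of_eStep hentry hby) (hL.lt_of_descends_of_eStep hd hentry).le

theorem loopsBack_of_desc (hL : C.IsLayered) {x y : V} (hd : C.Desc x y)
    (hyx : Relation.ReflTransGen C.AnyStep y x) : C.LoopsBack y x := by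
  obtain ⟨α, hα⟩ := hd
  obtain ⟨l, hchain, hnodup, hlast⟩ := List.exists_isChain_cons_nodup_of_relationReflTransGen hyx
  exact ⟨⟨α, hα⟩, hL.transGen_bStep_of_isChain_nodup l hchain hnodup hlast hα⟩

theorem reflTransGen_loopsBack (hL : C.IsLayered) {u v : V}
    (hd : Relation.ReflTransGen C.Desc u v) (hvu : Relation.ReflTransGen C.AnyStep v u) :
    Relation.ReflTransGen C.LoopsBack v u := by
  induction hd with
  | refl => exact .refl
  | tail hub hbv ih =>
    have hub' := reflTransGen_anyStep_of_reflTransGen_desc hub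
    exact .head (hL.loopsBack_of_desc hbv (hvu.trans hub'))
      (ih (hbv.reflTransGen_anyStep.trans hvu))

end IsLayered

end LChart

theorem sameSCC_descends_loopsBack_general {V A : Type} (C : LChart V A)
    (h : C.IsLLEE) (u v : V) (hscc : C.SameSCC u v)
    (hd : Relation.ReflTransGen C.Desc u v) :
    Relation.ReflTransGen C.LoopsBack v u :=
  LChart.IsLayered.reflTransGen_loopsBack h.w2b hd hscc.2

/-- If `u` and `v` lie in the same strongly connected component and `u ↓* v`, then
`v ⇢* u` (`v` loops back to `u` in finitely many steps). -/
theorem sameSCC_descends_loopsBack {V A : Type} [Finite V] (C : LChart V A)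
    (h : C.IsLLEE) (u v : V) (hscc : C.SameSCC u v)
    (hd : Relation.ReflTransGen C.Desc u v) :
    Relation.ReflTransGen C.LoopsBack v u :=
  sameSCC_descends_loopsBack_general C h u v hscc hd
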